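/- arXiv:0906.3061 — 4 statements merged into one kernel-verified Lean document; each statement's English description precedes it below -/
import Mathlib

section
/- Let C be a small category, J a Grothendieck topology on C, and D a full J-dense subcategory of C. Then a sieve S on an object c of C is J-covering if and only if for every morphism f : d ⟶ c in C with d an object of D, the sieve on d in D consisting of the morphisms g : e ⟶ d with e an object of D such that f ∘ g belongs to S is (J|_D)-covering. -/
open CategoryTheory

universe u

namespace Stmt0

variable {C : Type u} [SmallCategory C]

/-- The full subcategory of `C` on the objects in `D`. -/
abbrev Sub (D : Set C) := ObjectProperty.FullSubcategory (fun c => c ∈ D)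

/-- The inclusion functor of the full subcategory. -/
abbrev incl (D : Set C) : Sub D ⥤ C := ObjectProperty.ι _

/-- `D` is `J`-dense: every object of `C` admits a `J`-covering sieve generated by
morphisms whose domains lie in `D`. -/
def IsDenseSub (D : Set C) (J : GrothendieckTopology C) : Prop :=
  ∀ c : C, ∃ S ∈ J c, ∀ ⦃d : C⦄ (f : d ⟶ c), S f →
    ∃ e : C, e ∈ D ∧ ∃ (g : d ⟶ e) (h : e ⟶ c), S h ∧ g ≫ h = f

/-- The covering sieves of the induced "topology" `J|_D` on the full subcategory:
a sieve `T` on an object of `D` is covering iff the sieve of `C` it generates is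
`J`-covering. -/
def restrictCov (D : Set C) (J : GrothendieckTopology C) (d : Sub D) : Set (Sieve d) :=
  {T | Sieve.functorPushforward (incl D) T ∈ J d.obj}

namespace IsDenseSub

variable {D : Set C} {J : GrothendieckTopology C}

theorem mem_of_forall_pullback_mem (hD : IsDenseSub D J) {c : C} {S : Sieve c}
    (hS : ∀ (e : C), e ∈ D → ∀ h : e ⟶ c, S.pullback h ∈ J e) : S ∈ J c := by
  obtain ⟨R, hR, hR_factor⟩ := hD c
  refine J.transitive hR S fun x f hf => ?_
  obtain ⟨e, he, g, h, -, rfl⟩ := hR_factor f hf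
  rw [Sieve.pullback_comp]
  exact J.pullback_stable g (hS e he h)

-- Every arrow of `T` is covered by arrows out of `D`, and those already lie in the regenerated sieve.
theorem functorPushforward_functorPullback_mem (hD : IsDenseSub D J) {d : Sub D}
    {T : Sieve d.obj} (hT : T ∈ J d.obj) :
    (T.functorPullback (incl D)).functorPushforward (incl D) ∈ J d.obj := by
  refine J.transitive hT _ fun x k hk => hD.mem_of_forall_pullback_mem fun e he h => ?_
  have hhk : (T.functorPullback (incl D)).functorPushforward (incl D) (h ≫ k) :=
    Sieve.image_mem_functorPushforward (incl D) _
      (f := (ObjectProperty.homMk (h ≫ k) : (⟨e, he⟩ : Sub D) ⟶ d)) (T.downward_closed hk h)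
  rw [← Sieve.pullback_comp, Sieve.pullback_eq_top_of_mem _ hhk]
  exact J.top_mem e

end IsDenseSub

/-- A sieve `S` on `c` is `J`-covering if and only if for every morphism `f : d ⟶ c` with
`d ∈ D`, the sieve `{g : e ⟶ d in D | g ≫ f ∈ S}` is `(J|_D)`-covering. -/
theorem statement0 (D : Set C) (J : GrothendieckTopology C) (hD : IsDenseSub D J)
    (c : C) (S : Sieve c) :
    S ∈ J c ↔ ∀ (d : C) (hd : d ∈ D) (f : d ⟶ c),
      Sieve.functorPullback (incl D) (S.pullback f) ∈ restrictCov D J ⟨d, hd⟩ := by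
  refine ⟨fun hS d hd f => ?_, fun H => ?_⟩
  · exact hD.functorPushforward_functorPullback_mem (J.pullback_stable f hS)
  · refine hD.mem_of_forall_pullback_mem fun e he h => ?_
    exact J.superset_covering (Sieve.functorPullback_pushforward_le _ _) (H e he h)

end Stmt0
end

section
/- Let C be a small category, J a Grothendieck topology on C, D a full J-dense subcategory of C, and Z a Grothendieck topology on D containing J|_D. Then the assignment Z̄, sending each object c of C to the set of sieves S on c such that for every morphism f : d ⟶ c of C with d an object of D the sieve {g : e ⟶ d in D | f ∘ g ∈ S} is Z-covering, is a Grothendieck topology on C containing J, and its induced topology (Z̄)|_D on D equals Z. -/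
open CategoryTheory

universe u

namespace Stmt1

variable {C : Type u} [SmallCategory C]

/-- The full subcategory of `C` on the objects in `D`. -/
abbrev Sub (D : Set C) := ObjectProperty.FullSubcategory (fun c => c ∈ D)

/-- The inclusion functor of the full subcategory. -/
abbrev incl (D : Set C) : Sub D ⥤ C := ObjectProperty.ι _

/-- `D` is `J`-dense: every object of `C` admits a `J`-covering sieve generated by
morphisms whose domains lie in `D`. -/
def IsDenseSub (D : Set C) (J : GrothendieckTopology C) : Prop :=
  ∀ c : C, ∃ S ∈ J c, ∀ ⦃d : C⦄ (f : d ⟶ c), S f →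
    ∃ e : C, e ∈ D ∧ ∃ (g : d ⟶ e) (h : e ⟶ c), S h ∧ g ≫ h = f

/-- The covering sieves of the induced "topology" `J|_D` on the full subcategory:
a sieve `T` on an object of `D` is covering iff the sieve of `C` it generates is
`J`-covering. -/
def restrictCov (D : Set C) (J : GrothendieckTopology C) (d : Sub D) : Set (Sieve d) :=
  {T | Sieve.functorPushforward (incl D) T ∈ J d.obj}

/-- The assignment `Z̄`: a sieve `S` on `c` belongs to `Z̄(c)` iff for every `f : d ⟶ c`
with `d ∈ D`, the sieve `{g : e ⟶ d in D | g ≫ f ∈ S}` is `Z`-covering. -/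
def barCov (D : Set C) (Z : GrothendieckTopology (Sub D)) (c : C) : Set (Sieve c) :=
  {S | ∀ (d : C) (hd : d ∈ D) (f : d ⟶ c),
    Sieve.functorPullback (incl D) (S.pullback f) ∈ Z ⟨d, hd⟩}

/-!
`Z̄` inherits the axioms of a Grothendieck topology from `Z`, since membership in `Z̄` is tested
arrow by arrow on arrows out of `D`. On an object `d` of `D` it suffices to test the identity
(every other arrow into `d` lies in `D`), so `S ∈ Z̄(d)` iff the restriction of `S` to `D` is
`Z`-covering; as `D` is full, restricting a pushed-forward sieve gives it back, whence
`Z̄|_D = Z`. Finally `J ≤ Z̄`: by density, the restriction to `D` of a `J`-covering sieve on an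
object of `D` still generates a `J`-covering sieve, so it is `J|_D`-covering, hence `Z`-covering.
-/

section barTopology

variable {D : Set C} {Z : GrothendieckTopology (Sub D)}

theorem mem_barCov_obj_iff {d : Sub D} {S : Sieve ((incl D).obj d)} :
    S ∈ barCov D Z ((incl D).obj d) ↔ S.functorPullback (incl D) ∈ Z d := by
  constructor
  · intro hS
    simpa only [Sieve.pullback_id] using hS d.obj d.2 (𝟙 ((incl D).obj d))
  · intro hS d' hd' f
    let φ : (⟨d', hd'⟩ : Sub D) ⟶ d := ObjectProperty.homMk f
    change (S.pullback ((incl D).map φ)).functorPullback (incl D) ∈ Z _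
    rw [Sieve.functorPullback_pullback]
    exact Z.pullback_stable φ hS

theorem top_mem_barCov (c : C) : ⊤ ∈ barCov D Z c := by
  intro d hd f
  rw [Sieve.pullback_top, Sieve.functorPullback_top]
  exact Z.top_mem _

theorem pullback_mem_barCov {c c' : C} {S : Sieve c} (hS : S ∈ barCov D Z c) (h : c' ⟶ c) :
    S.pullback h ∈ barCov D Z c' := by
  intro d hd f
  rw [← Sieve.pullback_comp]
  exact hS d hd (f ≫ h)

theorem mem_barCov_of_pullback_mem {c : C} {S R : Sieve c} (hS : S ∈ barCov D Z c)
    (hR : ∀ ⦃c' : C⦄ ⦃h : c' ⟶ c⦄, S h → R.pullback h ∈ barCov D Z c') :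
    R ∈ barCov D Z c := by
  intro d hd f
  refine Z.transitive (hS d hd f) _ fun e g hg => ?_
  have hRg := mem_barCov_obj_iff.mp (hR hg)
  rwa [Sieve.pullback_comp, Sieve.functorPullback_pullback] at hRg

variable (D Z) in
def barTopology : GrothendieckTopology C where
  sieves := barCov D Z
  top_mem' := top_mem_barCov
  pullback_stable' _ _ _ h hS := pullback_mem_barCov hS h
  transitive' _ _ hS _ hR := mem_barCov_of_pullback_mem hS hR

theorem restrictCov_barTopology (d : Sub D) : restrictCov D (barTopology D Z) d = Z d := by
  ext T
  change _ ∈ barCov D Z ((incl D).obj d) ↔ _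
  rw [mem_barCov_obj_iff, Sieve.functorPullback_functorPushforward_eq]

theorem IsDenseSub.functorPushforward_functorPullback_mem {J : GrothendieckTopology C}
    (hD : IsDenseSub D J) {d : Sub D} {S : Sieve ((incl D).obj d)} (hS : S ∈ J _) :
    (S.functorPullback (incl D)).functorPushforward (incl D) ∈ J _ := by
  refine J.transitive hS _ fun e h hh => ?_
  obtain ⟨Se, hSe, hfactor⟩ := hD e
  refine J.superset_covering (fun x k hk => ?_) hSe
  obtain ⟨e', he', g, h', -, rfl⟩ := hfactor k hk
  let φ : (⟨e', he'⟩ : Sub D) ⟶ d := ObjectProperty.homMk (h' ≫ h)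
  refine ⟨_, φ, g, ?_, Category.assoc _ _ _⟩
  exact S.downward_closed hh h'

theorem le_barTopology {J : GrothendieckTopology C} (hD : IsDenseSub D J)
    (hZ : ∀ d, restrictCov D J d ⊆ Z d) : J ≤ barTopology D Z := by
  intro c S hS d hd f
  exact hZ ⟨d, hd⟩ <|
    hD.functorPushforward_functorPullback_mem (d := ⟨d, hd⟩) (J.pullback_stable f hS)

end barTopology

/-- If `D` is `J`-dense and `Z` is a Grothendieck topology on `D` containing `J|_D`, then
`Z̄` is a Grothendieck topology on `C` containing `J`, whose induced topology on `D` is `Z`. -/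
theorem statement1 (D : Set C) (J : GrothendieckTopology C) (hD : IsDenseSub D J)
    (Z : GrothendieckTopology (Sub D))
    (hZ : ∀ (d : Sub D) (T : Sieve d), T ∈ restrictCov D J d → T ∈ Z d) :
    ∃ K : GrothendieckTopology C,
      K.sieves = barCov D Z ∧ J ≤ K ∧
      (∀ d : Sub D, restrictCov D K d = Z.sieves d) :=
  ⟨barTopology D Z, rfl, le_barTopology hD hZ, restrictCov_barTopology⟩

end Stmt1
end

section
/- Let C be a small category and J a Grothendieck topology on C such that every J-covering sieve is stably nonempty. Then for every presheaf E : Cᵒᵖ ⥤ Type and every subpresheaf A of E, the subpresheaf N(A) of E is J-closed, i.e., N(A) equals its J-closure. -/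
open CategoryTheory CategoryTheory.GrothendieckTopology Opposite

universe u

namespace Stmt7

variable {C : Type u} [SmallCategory C]

/-- A sieve is stably nonempty if all its pullbacks are nonempty. -/
def StablyNonempty {c : C} (S : Sieve c) : Prop :=
  ∀ ⦃d : C⦄ (f : d ⟶ c), S.pullback f ≠ ⊥

/-- The subpresheaf `N(A)` of `E`, whose sections at `c` are the sections `e ∈ E(c)` such
that no restriction of `e` along any morphism lies in `A`. -/
def negSub (E : Cᵒᵖ ⥤ Type u) (A : Subfunctor E) : Subfunctor E where
  obj c := {e | ∀ (d : C) (f : d ⟶ unop c), E.map f.op e ∉ A.obj (op d)}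
  map := by
    intro U V i e he d f hf
    apply he d (f ≫ i.unop)
    have : (f ≫ i.unop).op = i ≫ f.op := rfl
    rw [this, FunctorToTypes.map_comp_apply] at *
    exact hf

theorem _root_.CategoryTheory.Subfunctor.sieveOfSection_pullback {D : Type*} [Category D]
    {F : Dᵒᵖ ⥤ Type*} (G : Subfunctor F) {c d : D} (s : F.obj (op c)) (f : d ⟶ c) :
    (G.sieveOfSection s).pullback f = G.sieveOfSection (F.map f.op s) := by
  ext e g
  simp [Subfunctor.sieveOfSection]

theorem notMem_negSub_of_mem {E : Cᵒᵖ ⥤ Type u} {A : Subfunctor E} {c : C} {x : E.obj (op c)}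
    (hx : x ∈ A.obj (op c)) : x ∉ (negSub E A).obj (op c) :=
  fun hN ↦ hN c (𝟙 c) (by simpa using hx)

theorem sieveOfSection_negSub_eq_bot {E : Cᵒᵖ ⥤ Type u} {A : Subfunctor E} {c : C}
    {x : E.obj (op c)} (hx : x ∈ A.obj (op c)) : (negSub E A).sieveOfSection x = ⊥ := by
  ext d g
  simpa [Subfunctor.sieveOfSection] using notMem_negSub_of_mem (A.map g.op hx)

/-- If every `J`-covering sieve is stably nonempty, then for every presheaf `E` and every
subpresheaf `A` of `E`, the subpresheaf `N(A)` is `J`-closed, i.e. it equals its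
`J`-closure (which is `Subpresheaf.sheafify J (negSub E A)` in Mathlib's terminology). -/
theorem statement7 (J : GrothendieckTopology C)
    (hJ : ∀ (c : C) (S : Sieve c), S ∈ J c → StablyNonempty S)
    (E : Cᵒᵖ ⥤ Type u) (A : Subfunctor E) :
    Subfunctor.sheafify J (negSub E A) = negSub E A := by
  refine le_antisymm (fun c e he d f hf ↦ hJ _ _ he f ?_) (Subfunctor.le_sheafify J _)
  rw [Subfunctor.sieveOfSection_pullback]
  exact sieveOfSection_negSub_eq_bot hf

end Stmt7
end

section
/- Let C be a small category and J a Grothendieck topology on C. Then the following are equivalent: (i) every stably nonempty sieve on every object of C is J-covering; (ii) for every object c of C and every sieve R on c, the sieve R ⊔ ¬R is J-covering. -/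
open CategoryTheory

universe u

namespace Stmt8

variable {C : Type u} [SmallCategory C]

/-- A sieve is stably nonempty if all its pullbacks are nonempty. -/
def StablyNonempty {c : C} (S : Sieve c) : Prop :=
  ∀ ⦃d : C⦄ (f : d ⟶ c), S.pullback f ≠ ⊥

/-- The pseudocomplement `¬R` of a sieve `R` on `c`: the sieve of morphisms `f` with
codomain `c` whose pullback sieve `f*(R)` is empty. -/
def negSieve {c : C} (R : Sieve c) : Sieve c where
  arrows := fun _ f => R.pullback f = ⊥
  downward_closed := by
    intro d e f hf g
    rw [Sieve.pullback_comp, hf]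
    exact le_antisymm (fun Y h hh => hh) bot_le

lemma negSieve_eq_bot_iff {c : C} (S : Sieve c) : negSieve S = ⊥ ↔ StablyNonempty S := by
  simp only [Sieve.ext_iff, Sieve.bot_apply, iff_false]
  rfl

/-- If `f*(R ⊔ ¬R)` were empty, so would be `f*(R)`; but then `f ∈ ¬R`. -/
lemma stablyNonempty_sup_negSieve {c : C} (R : Sieve c) : StablyNonempty (R ⊔ negSieve R) := by
  intro d f hf
  have hR : R.pullback f = ⊥ :=
    eq_bot_iff.2 (hf ▸ Sieve.pullback_monotone f le_sup_left)
  have hid : (R ⊔ negSieve R).pullback f (𝟙 d) :=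
    Or.inr (show R.pullback (𝟙 d ≫ f) = ⊥ by rwa [Category.id_comp])
  rw [hf] at hid
  exact hid

/-- Every stably nonempty sieve is `J`-covering if and only if `R ⊔ ¬R` is `J`-covering
for every sieve `R`. -/
theorem statement8 (J : GrothendieckTopology C) :
    (∀ (c : C) (S : Sieve c), StablyNonempty S → S ∈ J c) ↔
    (∀ (c : C) (R : Sieve c), R ⊔ negSieve R ∈ J c) := by
  refine ⟨fun h c R => h c _ (stablyNonempty_sup_negSieve R), fun h c S hS => ?_⟩
  simpa only [(negSieve_eq_bot_iff S).2 hS, sup_bot_eq] using h c S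

end Stmt8
end
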